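/- Let H₀ ∈ SL(2,ℝ) be hyperbolic with eigenvalues e^{α}, e^{-α} (α > 0). Identify P(ℝ²) with T = ℝ/ℤ via ψ(ℝ(cos πθ, sin πθ)) = θ and let Ĥ denote the induced circle diffeomorphism of H ∈ SL(2,ℝ). Then for all H sufficiently close to H₀, H is hyperbolic, and there is a constant c > 0 such that for every δ ∈ (0, 1/2) and every n ≥ 1, Ĥ^n(T \ B(s(H), δ)) ⊆ B(u(H), c δ^{-1} e^{-nα}), where u(H), s(H) are the attracting and repelling fixed points of Ĥ on T. -/

import Mathlib

/-!
View `ℝ²` as `ℂ`, so that the line `ℝz` is the point `arg z / π` of `T`, and write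
`cross z w = det (z, w)`. Jordan's inequality `sin x ≥ 2x/π` gives
`2 dist(ℝz, ℝw) ‖z‖ ‖w‖ ≤ |det (z, w)|`, and `det` is invariant under `SL(2,ℝ)`.
If `H zu = e^β zu` and `H zs = e^{-β} zs`, then for `w = Hⁿ v` invariance gives
`det (w, zs) = e^{nβ} det (v, zs)` and `det (w, zu) = e^{-nβ} det (v, zu)`. When `ℝv` is
`δ`-far from `s`, the first identity forces `‖w‖ ≥ 2δ e^{nβ} ‖v‖`, and the second then puts
`ℝw` within `e^{-2nβ} / (4δ)` of `u`. For `H` near `H₀` one has `tr H = 2 cosh β` with `β > α/2`,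
so that `e^{-2nβ} ≤ e^{-nα}`.
-/

open scoped Real

instance : Fact ((0 : ℝ) < 1) := ⟨zero_lt_one⟩

/-- The circle map `Ĥ` on `T = ℝ/ℤ ≅ P(ℝ²)` induced by `H ∈ SL(2,ℝ)`, via the
identification `ψ(ℝ(cos πθ, sin πθ)) = θ`: the class of `θ` is sent to the class of
`arg(H·(cos πθ, sin πθ))/π` (the vector viewed as a complex number). -/
noncomputable def projCircle (H : Matrix.SpecialLinearGroup (Fin 2) ℝ) :
    AddCircle (1 : ℝ) → AddCircle (1 : ℝ) := fun x =>
  let θ : ℝ := (AddCircle.equivIco 1 0 x : ℝ)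
  let a : ℝ := (H : Matrix (Fin 2) (Fin 2) ℝ) 0 0 * Real.cos (π * θ)
      + (H : Matrix (Fin 2) (Fin 2) ℝ) 0 1 * Real.sin (π * θ)
  let b : ℝ := (H : Matrix (Fin 2) (Fin 2) ℝ) 1 0 * Real.cos (π * θ)
      + (H : Matrix (Fin 2) (Fin 2) ℝ) 1 1 * Real.sin (π * θ)
  ((Complex.arg (Complex.mk a b) / π : ℝ) : AddCircle (1 : ℝ))

open Real

lemma Matrix.abs_trace_sub_trace_lt {n : Type*} [Fintype n] [Nonempty n] {M N : Matrix n n ℝ}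
    {ε : ℝ} (h : ∀ i j, |M i j - N i j| < ε) : |M.trace - N.trace| < Fintype.card n * ε := by
  rw [Matrix.trace, Matrix.trace, ← Finset.sum_sub_distrib, ← nsmul_eq_mul,
    ← Finset.card_univ, ← Finset.sum_const]
  exact (Finset.abs_sum_le_sum_abs _ _).trans_lt
    (Finset.sum_lt_sum_of_nonempty Finset.univ_nonempty fun i _ => h i i)

lemma Real.exists_lt_and_eq_two_mul_cosh {α t : ℝ} (hα : 0 ≤ α) (ht : 2 * cosh α < t) :
    ∃ β, α < β ∧ t = 2 * cosh β := by
  have ht1 : 1 ≤ t / 2 := by linarith [one_le_cosh α]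
  refine ⟨arcosh (t / 2), ?_, by rw [cosh_arcosh ht1]; ring⟩
  rw [← abs_of_nonneg hα, ← abs_of_nonneg (arcosh_nonneg ht1), ← cosh_lt_cosh,
    cosh_arcosh ht1]
  linarith

lemma UnitAddCircle.two_mul_norm_coe_le_abs_sin (t : ℝ) :
    2 * ‖(t : AddCircle (1 : ℝ))‖ ≤ |sin (π * t)| := by
  rw [UnitAddCircle.norm_eq]
  set Δ := t - round t
  have hΔ : π * |Δ| ≤ π / 2 := by nlinarith [abs_sub_round t, pi_pos]
  have hsin : |sin (π * t)| = |sin (π * Δ)| := by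
    rw [show π * t = π * Δ + round t * π by ring, sin_add_int_mul_pi, abs_mul, abs_neg_one_zpow,
      one_mul]
  have hjordan : 2 * |Δ| ≤ sin (π * |Δ|) := by
    simpa [field] using mul_le_sin (by positivity) hΔ
  have habs : sin (π * |Δ|) ≤ |sin (π * Δ)| := by
    rcases abs_choice Δ with h | h <;> rw [h]
    · exact le_abs_self _
    · rw [mul_neg, sin_neg]; exact neg_le_abs _
  linarith

namespace ProjLine

/- Vectors of `ℝ²` are complex numbers; `projPoint z` is the point `ψ(ℝz)` of `T`, and
`unitVec x` is the representative `(cos πθ, sin πθ)` of `x` used by `projCircle`. -/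

def cross (z w : ℂ) : ℝ := z.re * w.im - z.im * w.re

def act (M : Matrix (Fin 2) (Fin 2) ℝ) (z : ℂ) : ℂ :=
  ⟨M 0 0 * z.re + M 0 1 * z.im, M 1 0 * z.re + M 1 1 * z.im⟩

noncomputable def projPoint (z : ℂ) : AddCircle (1 : ℝ) := (z.arg / π : ℝ)

noncomputable def unitVec (x : AddCircle (1 : ℝ)) : ℂ :=
  ⟨cos (π * AddCircle.equivIco 1 0 x), sin (π * AddCircle.equivIco 1 0 x)⟩

section Algebra

variable (M N : Matrix (Fin 2) (Fin 2) ℝ) (z w : ℂ)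

lemma act_mul : act (M * N) z = act M (act N z) := by
  apply Complex.ext <;> simp only [act, Matrix.mul_apply, Fin.sum_univ_two] <;> ring

lemma act_one : act 1 z = z := by
  apply Complex.ext <;> simp [act]

lemma act_real_mul (l : ℝ) : act M (l * z) = l * act M z := by
  apply Complex.ext <;>
    simp only [act, Complex.mul_re, Complex.mul_im, Complex.ofReal_re, Complex.ofReal_im] <;> ring

lemma act_pow_of_act_eq {μ : ℝ} (h : act M z = μ * z) (n : ℕ) :
    act (M ^ n) z = ↑(μ ^ n) * z := by
  induction n with
  | zero => simp [act_one]
  | succ n ih => rw [pow_succ', act_mul, ih, act_real_mul, h]; push_cast; ring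

lemma cross_act : cross (act M z) (act M w) = M.det * cross z w := by
  simp only [cross, act, Matrix.det_fin_two]; ring

lemma cross_real_mul_right (l : ℝ) : cross z (l * w) = l * cross z w := by
  simp only [cross, Complex.mul_re, Complex.mul_im, Complex.ofReal_re, Complex.ofReal_im]
  ring

lemma cross_eq_im_conj_mul : cross z w = (starRingEnd ℂ z * w).im := by
  simp only [cross, Complex.mul_im, Complex.conj_re, Complex.conj_im]
  ring

lemma abs_cross_le : |cross z w| ≤ ‖z‖ * ‖w‖ := by
  rw [cross_eq_im_conj_mul, ← Complex.norm_conj z, ← norm_mul]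
  exact Complex.abs_im_le_norm _

lemma cross_eq_norm_mul_norm_mul_sin : cross z w = ‖z‖ * ‖w‖ * sin (w.arg - z.arg) := by
  rw [sin_sub, cross, ← Complex.norm_mul_cos_arg z, ← Complex.norm_mul_sin_arg z,
    ← Complex.norm_mul_cos_arg w, ← Complex.norm_mul_sin_arg w]
  ring

end Algebra

lemma act_ne_zero {M : Matrix (Fin 2) (Fin 2) ℝ} (hM : M.det ≠ 0) {z : ℂ} (hz : z ≠ 0) :
    act M z ≠ 0 := by
  intro h
  have key : M.det * Complex.normSq z = 0 := by
    have := cross_act M z (Complex.I * z)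
    rw [h] at this
    simp only [cross, Complex.normSq_apply, Complex.zero_re, Complex.zero_im, Complex.mul_re,
      Complex.mul_im, Complex.I_re, Complex.I_im] at this ⊢
    linarith
  exact mul_ne_zero hM (Complex.normSq_pos.mpr hz).ne' key

lemma exists_eq_real_mul_of_cross_eq_zero {z w : ℂ} (hz : z ≠ 0) (h : cross z w = 0) :
    ∃ l : ℝ, w = l * z := by
  refine ⟨(starRingEnd ℂ z * w).re / Complex.normSq z, ?_⟩
  have hreal : starRingEnd ℂ z * w = ((starRingEnd ℂ z * w).re : ℂ) := by
    apply Complex.ext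
    · simp
    · rw [← cross_eq_im_conj_mul, h, Complex.ofReal_im]
  have hn : (Complex.normSq z : ℂ) ≠ 0 := by exact_mod_cast (Complex.normSq_pos.mpr hz).ne'
  push_cast
  rw [← hreal, div_mul_eq_mul_div, eq_div_iff hn, Complex.normSq_eq_conj_mul_self]
  ring

section Circle

lemma two_mul_dist_projPoint_le (z w : ℂ) :
    2 * dist (projPoint z) (projPoint w) * (‖z‖ * ‖w‖) ≤ |cross z w| := by
  have h := UnitAddCircle.two_mul_norm_coe_le_abs_sin ((z.arg - w.arg) / π)
  rw [mul_div_cancel₀ _ pi_ne_zero, sub_div, AddCircle.coe_sub] at h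
  rw [cross_eq_norm_mul_norm_mul_sin, abs_mul, abs_of_nonneg (by positivity), ← neg_sub, sin_neg,
    abs_neg, dist_eq_norm, mul_comm (‖z‖ * ‖w‖)]
  exact mul_le_mul_of_nonneg_right h (by positivity)

lemma cross_eq_zero_of_projPoint_eq {z w : ℂ} (h : projPoint z = projPoint w) :
    cross z w = 0 := by
  rw [projPoint, projPoint, ← sub_eq_zero, ← AddCircle.coe_sub, AddCircle.coe_eq_zero_iff] at h
  obtain ⟨n, hn⟩ := h
  have : w.arg - z.arg = (-n : ℤ) * π := by
    rw [zsmul_one] at hn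
    field_simp at hn
    push_cast
    linarith
  rw [cross_eq_norm_mul_norm_mul_sin, this, sin_int_mul_pi, mul_zero]

lemma projPoint_neg (z : ℂ) : projPoint (-z) = projPoint z := by
  rcases eq_or_ne z 0 with rfl | hz
  · rw [neg_zero]
  obtain ⟨k, hk⟩ := Real.Angle.angle_eq_iff_two_pi_dvd_sub.mp (Complex.arg_neg_coe_angle hz)
  rw [projPoint, projPoint, ← sub_eq_zero, ← AddCircle.coe_sub, AddCircle.coe_eq_zero_iff]
  refine ⟨2 * k + 1, ?_⟩
  beta_reduce at hk
  rw [zsmul_one]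
  field_simp
  push_cast
  linarith

lemma projPoint_real_mul {l : ℝ} (hl : l ≠ 0) (z : ℂ) : projPoint (l * z) = projPoint z := by
  rcases hl.lt_or_gt with hl | hl
  · rw [show (l : ℂ) * z = ((-l : ℝ) : ℂ) * -z by push_cast; ring, projPoint,
      Complex.arg_real_mul _ (neg_pos.mpr hl), ← projPoint, projPoint_neg]
  · rw [projPoint, Complex.arg_real_mul _ hl, ← projPoint]

lemma projPoint_unitVec (x : AddCircle (1 : ℝ)) : projPoint (unitVec x) = x := by
  obtain ⟨hθ0, hθ1⟩ := (AddCircle.equivIco 1 0 x).2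
  have harg : (unitVec x).arg = π * AddCircle.equivIco 1 0 x := by
    rw [unitVec, Complex.mk_eq_add_mul_I, Complex.ofReal_cos, Complex.ofReal_sin,
      Complex.arg_cos_add_sin_mul_I]
    constructor <;> nlinarith [pi_pos]
  rw [projPoint, harg, mul_div_cancel_left₀ _ pi_ne_zero]
  exact (AddCircle.equivIco 1 0).symm_apply_apply x

lemma unitVec_ne_zero (x : AddCircle (1 : ℝ)) : unitVec x ≠ 0 := by
  intro h
  have hre := congrArg Complex.re h
  have him := congrArg Complex.im h
  simp only [unitVec, Complex.zero_re, Complex.zero_im] at hre him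
  have := sin_sq_add_cos_sq (π * AddCircle.equivIco 1 0 x)
  rw [hre, him] at this
  norm_num at this

lemma exists_unitVec_projPoint_eq {z : ℂ} (hz : z ≠ 0) :
    ∃ l : ℝ, l ≠ 0 ∧ unitVec (projPoint z) = l * z := by
  obtain ⟨l, hl⟩ := exists_eq_real_mul_of_cross_eq_zero hz
    (cross_eq_zero_of_projPoint_eq (projPoint_unitVec (projPoint z)).symm)
  refine ⟨l, ?_, hl⟩
  rintro rfl
  exact unitVec_ne_zero _ (by simpa using hl)

variable (H : Matrix.SpecialLinearGroup (Fin 2) ℝ)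

lemma projCircle_projPoint {z : ℂ} (hz : z ≠ 0) :
    projCircle H (projPoint z) = projPoint (act H z) := by
  obtain ⟨l, hl, hlz⟩ := exists_unitVec_projPoint_eq hz
  change projPoint (act H (unitVec (projPoint z))) = _
  rw [hlz, act_real_mul, projPoint_real_mul hl]

lemma iterate_projCircle_projPoint {z : ℂ} (hz : z ≠ 0) (n : ℕ) :
    (projCircle H)^[n] (projPoint z) =
      projPoint (act ((H : Matrix (Fin 2) (Fin 2) ℝ) ^ n) z) := by
  induction n with
  | zero => rw [Function.iterate_zero_apply, pow_zero, act_one]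
  | succ n ih =>
    have hdet : ((H : Matrix (Fin 2) (Fin 2) ℝ) ^ n).det ≠ 0 := by simp [Matrix.det_pow]
    rw [Function.iterate_succ_apply', ih, projCircle_projPoint H (act_ne_zero hdet hz), pow_succ',
      act_mul]

lemma projCircle_projPoint_eq_self {z : ℂ} (hz : z ≠ 0) {μ : ℝ} (hμ : μ ≠ 0)
    (h : act H z = μ * z) : projCircle H (projPoint z) = projPoint z := by
  rw [projCircle_projPoint H hz, h, projPoint_real_mul hμ]

end Circle

section Hyperbolic

variable {M : Matrix (Fin 2) (Fin 2) ℝ}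

lemma exists_act_eq_mul_of_trace_eq (hM : M.det = 1) {μ : ℝ} (hμ : μ ≠ 0)
    (htr : M.trace = μ + μ⁻¹) : ∃ z : ℂ, z ≠ 0 ∧ act M z = μ * z := by
  have hdet : (M - μ • 1).det = 0 := by
    rw [Matrix.det_fin_two] at hM ⊢
    rw [Matrix.trace_fin_two] at htr
    simp only [Matrix.sub_apply, Matrix.smul_apply, Matrix.one_apply_eq, smul_eq_mul,
      Matrix.one_apply_ne zero_ne_one, Matrix.one_apply_ne one_ne_zero]
    linear_combination hM - μ * htr - mul_inv_cancel₀ hμ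
  obtain ⟨v, hv0, hv⟩ := Matrix.exists_mulVec_eq_zero_iff.mpr hdet
  rw [Matrix.sub_mulVec, Matrix.smul_mulVec, Matrix.one_mulVec, sub_eq_zero] at hv
  refine ⟨⟨v 0, v 1⟩, fun h => hv0 ?_, ?_⟩
  · ext i
    fin_cases i
    exacts [congrArg Complex.re h, congrArg Complex.im h]
  · have h0 := congrFun hv 0
    have h1 := congrFun hv 1
    simp only [Matrix.mulVec, dotProduct, Fin.sum_univ_two, Pi.smul_apply, smul_eq_mul] at h0 h1
    apply Complex.ext <;> simp [act, h0, h1]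

lemma exists_eigenvectors_of_trace_eq_two_mul_cosh (hM : M.det = 1) {β : ℝ}
    (htr : M.trace = 2 * cosh β) :
    ∃ zu zs : ℂ, zu ≠ 0 ∧ zs ≠ 0 ∧
      act M zu = exp β * zu ∧ act M zs = (exp β)⁻¹ * zs := by
  rw [cosh_eq, exp_neg, mul_div_cancel₀ _ two_ne_zero] at htr
  obtain ⟨zu, hzu, hu⟩ := exists_act_eq_mul_of_trace_eq hM (exp_pos β).ne' htr
  obtain ⟨zs, hzs, hs⟩ := exists_act_eq_mul_of_trace_eq hM (inv_ne_zero (exp_pos β).ne')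
    (by rw [inv_inv, add_comm, htr])
  exact ⟨zu, zs, hzu, hzs, hu, hs⟩

lemma projPoint_ne_of_act_eq {a b : ℝ} (hab : a ≠ b) {z w : ℂ} (hz : z ≠ 0) (hw : w ≠ 0)
    (hMz : act M z = a * z) (hMw : act M w = b * w) : projPoint z ≠ projPoint w := by
  intro h
  obtain ⟨l, rfl⟩ := exists_eq_real_mul_of_cross_eq_zero hz (cross_eq_zero_of_projPoint_eq h)
  rw [act_real_mul, hMz] at hMw
  have : ((l * (a - b) : ℝ) : ℂ) * z = 0 := by push_cast; linear_combination hMw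
  have hl : l * (a - b) = 0 := by exact_mod_cast (mul_eq_zero.mp this).resolve_right hz
  rw [(mul_eq_zero.mp hl).resolve_right (sub_ne_zero.mpr hab), Complex.ofReal_zero, zero_mul] at hw
  exact hw rfl

lemma four_mul_dist_mul_dist_mul_sq_le (hM : M.det = 1) {q : ℝ} (hq : 0 < q) {zu zs v : ℂ}
    (hzu : zu ≠ 0) (hzs : zs ≠ 0) (hv : v ≠ 0) (hu : act M zu = q * zu)
    (hs : act M zs = q⁻¹ * zs) :
    4 * dist (projPoint v) (projPoint zs) * dist (projPoint (act M v)) (projPoint zu) * q ^ 2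
      ≤ 1 := by
  set w := act M v
  set δ := dist (projPoint v) (projPoint zs)
  set d := dist (projPoint w) (projPoint zu)
  have hcu : q * cross w zu = cross v zu := by
    rw [← cross_real_mul_right, ← hu, cross_act, hM, one_mul]
  have hcs : cross w zs = q * cross v zs := by
    rw [← one_mul (cross v zs), ← hM, ← cross_act, hs, cross_real_mul_right,
      mul_inv_cancel_left₀ hq.ne']
  have hstretch : 2 * δ * ‖v‖ * q ≤ ‖w‖ := by
    refine le_of_mul_le_mul_right ?_ (norm_pos_iff.mpr hzs)
    calc 2 * δ * ‖v‖ * q * ‖zs‖ = q * (2 * δ * (‖v‖ * ‖zs‖)) := by ring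
      _ ≤ q * |cross v zs| := by gcongr; exact two_mul_dist_projPoint_le v zs
      _ = |cross w zs| := by rw [hcs, abs_mul, abs_of_pos hq]
      _ ≤ ‖w‖ * ‖zs‖ := abs_cross_le w zs
  have hclose : 2 * d * ‖w‖ * q ≤ ‖v‖ := by
    refine le_of_mul_le_mul_right ?_ (norm_pos_iff.mpr hzu)
    calc 2 * d * ‖w‖ * q * ‖zu‖ = q * (2 * d * (‖w‖ * ‖zu‖)) := by ring
      _ ≤ q * |cross w zu| := by gcongr; exact two_mul_dist_projPoint_le w zu
      _ = |cross v zu| := by rw [← hcu, abs_mul, abs_of_pos hq]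
      _ ≤ ‖v‖ * ‖zu‖ := abs_cross_le v zu
  refine le_of_mul_le_mul_right ?_ (norm_pos_iff.mpr hv)
  calc 4 * δ * d * q ^ 2 * ‖v‖ = 2 * d * q * (2 * δ * ‖v‖ * q) := by ring
    _ ≤ 2 * d * q * ‖w‖ := by gcongr
    _ ≤ 1 * ‖v‖ := by linarith

lemma four_mul_mul_dist_iterate_projCircle_le (H : Matrix.SpecialLinearGroup (Fin 2) ℝ) {β : ℝ}
    {zu zs : ℂ} (hzu : zu ≠ 0) (hzs : zs ≠ 0) (hu : act H zu = exp β * zu)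
    (hs : act H zs = (exp β)⁻¹ * zs) {δ : ℝ} {x : AddCircle (1 : ℝ)}
    (hx : x ∉ Metric.ball (projPoint zs) δ) (n : ℕ) :
    4 * δ * dist ((projCircle H)^[n] x) (projPoint zu) ≤ exp (-(2 * n * β)) := by
  have key := four_mul_dist_mul_dist_mul_sq_le (by simp [Matrix.det_pow]) (pow_pos (exp_pos β) n)
    hzu hzs (unitVec_ne_zero x) (act_pow_of_act_eq _ _ hu n)
    (by rw [act_pow_of_act_eq _ _ hs n, inv_pow])
  rw [projPoint_unitVec, ← iterate_projCircle_projPoint H (unitVec_ne_zero x), projPoint_unitVec,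
    ← exp_nat_mul, ← exp_nat_mul, Nat.cast_ofNat, ← mul_assoc] at key
  rw [exp_neg, ← one_div, le_div_iff₀ (exp_pos _)]
  refine le_trans ?_ key
  gcongr
  exact not_lt.mp hx

end Hyperbolic

end ProjLine

open ProjLine

/-- let `H₀ ∈ SL(2,ℝ)` be hyperbolic with eigenvalues `e^α, e^{-α}` (`α > 0`).
Then every `H` sufficiently (entrywise) close to `H₀` is hyperbolic, and there is `c > 0`
such that for the attracting/repelling fixed points `u, s` of `Ĥ` on `T`, every `δ ∈ (0,1/2)`
and `n ≥ 1`: `Ĥⁿ(T \ B(s,δ)) ⊆ B(u, c δ⁻¹ e^{-nα})`. -/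
theorem stmt8 (H₀ : Matrix.SpecialLinearGroup (Fin 2) ℝ) (α : ℝ) (hα : 0 < α)
    (htr : Matrix.trace (H₀ : Matrix (Fin 2) (Fin 2) ℝ) = Real.exp α + Real.exp (-α)) :
    ∃ ε > (0 : ℝ), ∀ H : Matrix.SpecialLinearGroup (Fin 2) ℝ,
      (∀ i j, |(H : Matrix (Fin 2) (Fin 2) ℝ) i j - (H₀ : Matrix (Fin 2) (Fin 2) ℝ) i j| < ε) →
      |Matrix.trace (H : Matrix (Fin 2) (Fin 2) ℝ)| > 2 ∧
      ∃ u s : AddCircle (1 : ℝ), projCircle H u = u ∧ projCircle H s = s ∧ u ≠ s ∧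
        ∃ c > (0 : ℝ), ∀ δ : ℝ, 0 < δ → δ < 1 / 2 → ∀ n : ℕ, 1 ≤ n →
          ∀ x : AddCircle (1 : ℝ), x ∉ Metric.ball s δ →
            (projCircle H)^[n] x ∈ Metric.ball u (c * δ⁻¹ * Real.exp (-(n : ℝ) * α)) := by
  have hcosh : cosh (α / 2) < cosh α := by
    rw [cosh_lt_cosh, abs_of_pos hα, abs_of_pos (half_pos hα)]
    linarith
  refine ⟨cosh α - cosh (α / 2), sub_pos.mpr hcosh, fun H hH => ?_⟩
  have ht : 2 * cosh (α / 2) < (H : Matrix (Fin 2) (Fin 2) ℝ).trace := by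
    have := Matrix.abs_trace_sub_trace_lt hH
    rw [htr, show exp α + exp (-α) = 2 * cosh α by rw [cosh_eq]; ring] at this
    simp only [Fintype.card_fin, Nat.cast_ofNat] at this
    linarith [(abs_lt.mp this).1]
  obtain ⟨β, hβ, htβ⟩ := Real.exists_lt_and_eq_two_mul_cosh (half_pos hα).le ht
  obtain ⟨zu, zs, hzu, hzs, hu, hs⟩ := exists_eigenvectors_of_trace_eq_two_mul_cosh H.prop htβ
  have hexp : (exp β)⁻¹ < exp β := by rw [← exp_neg, exp_lt_exp]; linarith
  refine ⟨?_, projPoint zu, projPoint zs, projCircle_projPoint_eq_self H hzu (exp_pos β).ne' hu,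
    projCircle_projPoint_eq_self H hzs (inv_pos.mpr (exp_pos β)).ne' hs,
    projPoint_ne_of_act_eq hexp.ne' hzu hzs hu hs, 1, one_pos, fun δ hδ _ n _ x hx => ?_⟩
  · rw [gt_iff_lt, lt_abs]
    left
    linarith [one_le_cosh (α / 2)]
  have hrate : exp (-(2 * n * β)) ≤ exp (-n * α) := by
    rw [exp_le_exp]
    nlinarith [n.cast_nonneg (α := ℝ)]
  have key := (four_mul_mul_dist_iterate_projCircle_le H hzu hzs hu hs hx n).trans hrate
  rw [Metric.mem_ball, one_mul, inv_mul_eq_div, lt_div_iff₀ hδ]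
  have : 0 ≤ δ * dist ((projCircle H)^[n] x) (projPoint zu) := by positivity
  linarith [exp_pos (-n * α)]
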